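/- Let C be a finitely generated free F₂[U,V]-module with a bigraded differential ∂ and let D_U and D_V be the formal partial derivative operators with respect to U and V. Define Φ = [∂, D_U] = ∂D_U + D_U∂ and Ψ = [∂, D_V]. Then Φ and Ψ are F₂[U,V]-equivariant chain maps: Φ∂ + ∂Φ = 0 and Φ(U·x) = U·Φ(x), Φ(V·x) = V·Φ(x) for all x ∈ C, and similarly for Ψ. -/
import Mathlib


/-!
For a finitely generated free `F₂[U,V]`-module `C` with differential `∂`
(`∂² = 0`), the maps `Φ = [∂, D_U]` and `Ψ = [∂, D_V]` (commutators with
the formal partial derivatives) are `F₂[U,V]`-equivariant chain maps: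
`Φ∂ + ∂Φ = 0`, `Φ(U·x) = U·Φ(x)`, `Φ(V·x) = V·Φ(x)`, and similarly for `Ψ`.
-/

noncomputable section

open MvPolynomial

abbrev R₂ : Type := MvPolynomial (Fin 2) (ZMod 2)

def Up : R₂ := X 0
def Vp : R₂ := X 1

/-- Formal partial derivative with respect to `U`, applied coefficient-wise. -/
def DU {ι : Type*} (c : ι → R₂) : ι → R₂ := fun i => pderiv 0 (c i)

/-- Formal partial derivative with respect to `V`, applied coefficient-wise. -/
def DV {ι : Type*} (c : ι → R₂) : ι → R₂ := fun i => pderiv 1 (c i)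

lemma add_self_fun {ι : Type*} (x : ι → R₂) : x + x = 0 := by
  funext i
  exact CharTwo.add_self_eq_zero _

lemma DU_smul_X {ι : Type*} (j : Fin 2) (x : ι → R₂) :
    DU ((X j : R₂) • x) = (pderiv 0 (X j : R₂)) • x + (X j : R₂) • DU x := by
  funext i
  simp [DU, Pi.smul_apply, smul_eq_mul, pderiv_mul, mul_comm]

lemma DV_smul_X {ι : Type*} (j : Fin 2) (x : ι → R₂) :
    DV ((X j : R₂) • x) = (pderiv 1 (X j : R₂)) • x + (X j : R₂) • DV x := by
  funext i
  simp [DV, Pi.smul_apply, smul_eq_mul, pderiv_mul, mul_comm]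

lemma DU_zero {ι : Type*} : DU (0 : ι → R₂) = 0 := by
  funext i; simp [DU]

lemma DV_zero {ι : Type*} : DV (0 : ι → R₂) = 0 := by
  funext i; simp [DV]

theorem Phi_Psi_equivariant_chain_maps {ι : Type*} [Fintype ι]
    (d : (ι → R₂) →ₗ[R₂] (ι → R₂)) (hdd : ∀ x, d (d x) = 0) :
    let Φ : (ι → R₂) → (ι → R₂) := fun c => d (DU c) + DU (d c)
    let Ψ : (ι → R₂) → (ι → R₂) := fun c => d (DV c) + DV (d c)
    (∀ x, Φ (d x) + d (Φ x) = 0) ∧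
    (∀ x, Φ (Up • x) = Up • Φ x) ∧ (∀ x, Φ (Vp • x) = Vp • Φ x) ∧
    (∀ x, Ψ (d x) + d (Ψ x) = 0) ∧
    (∀ x, Ψ (Up • x) = Up • Ψ x) ∧ (∀ x, Ψ (Vp • x) = Vp • Ψ x) := by
  intro Φ Ψ
  refine ⟨?_, ?_, ?_, ?_, ?_, ?_⟩
  · intro x
    show d (DU (d x)) + DU (d (d x)) + d (d (DU x) + DU (d x)) = 0
    rw [hdd, DU_zero, map_add, hdd, add_zero, zero_add]
    exact add_self_fun _
  · intro x
    show d (DU (Up • x)) + DU (d (Up • x)) = Up • (d (DU x) + DU (d x))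
    rw [show d (Up • x) = Up • d x from map_smul d Up x]
    rw [Up, DU_smul_X, DU_smul_X, pderiv_X_self, one_smul, one_smul,
      map_add, map_smul]
    rw [smul_add]
    abel_nf
    have : (2 : ℤ) • d x = 0 := by
      rw [two_smul]; exact add_self_fun _
    rw [this, zero_add]
  · intro x
    show d (DU (Vp • x)) + DU (d (Vp • x)) = Vp • (d (DU x) + DU (d x))
    rw [show d (Vp • x) = Vp • d x from map_smul d Vp x]
    rw [Vp, DU_smul_X, DU_smul_X]
    have h0 : pderiv (0 : Fin 2) (X 1 : R₂) = 0 := by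
      rw [pderiv_X]; simp
    rw [h0, zero_smul, zero_add, zero_smul, zero_add, map_smul, smul_add]
  · intro x
    show d (DV (d x)) + DV (d (d x)) + d (d (DV x) + DV (d x)) = 0
    rw [hdd, DV_zero, map_add, hdd, add_zero, zero_add]
    exact add_self_fun _
  · intro x
    show d (DV (Up • x)) + DV (d (Up • x)) = Up • (d (DV x) + DV (d x))
    rw [show d (Up • x) = Up • d x from map_smul d Up x]
    rw [Up, DV_smul_X, DV_smul_X]
    have h0 : pderiv (1 : Fin 2) (X 0 : R₂) = 0 := by
      rw [pderiv_X]; simp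
    rw [h0, zero_smul, zero_add, zero_smul, zero_add, map_smul, smul_add]
  · intro x
    show d (DV (Vp • x)) + DV (d (Vp • x)) = Vp • (d (DV x) + DV (d x))
    rw [show d (Vp • x) = Vp • d x from map_smul d Vp x]
    rw [Vp, DV_smul_X, DV_smul_X, pderiv_X_self, one_smul, one_smul,
      map_add, map_smul]
    rw [smul_add]
    abel_nf
    have : (2 : ℤ) • d x = 0 := by
      rw [two_smul]; exact add_self_fun _
    rw [this, zero_add]
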